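/- Let R(ξ) be an N × N polynomial matrix over ℝ[ξ] of full rank with nonzero behavior B = {y : ℤ≥0 → ℝ^N : R(σ)y = 0}. Then the system is maximally secure, i.e., its security index δ(Σ) := min{‖y‖ : 0 ≠ y ∈ B} equals N, if and only if every N × (N−1) submatrix of R(ξ) obtained by deleting one column is left unimodular. -/

import Mathlib

/-!
A nonzero trajectory vanishing in coordinate `i` is the same as a nonzero solution of
`P(σ) v = 0` for the matrix `P` obtained from `R` by deleting column `i`, so it suffices to show
that a tall polynomial matrix `P` acts injectively on signals iff it is left unimodular. A left
inverse clearly gives injectivity. Conversely, if `P` has no left inverse then its maximal minors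
generate a proper ideal of `ℝ[ξ]` (Cramer's rule), hence share a complex root `z`; then `P(z)` has
a kernel vector `v`, and the real or imaginary part of `t ↦ z ^ t v` is a nonzero real solution.
-/

open Polynomial

/-- A signal with components indexed by `β`. -/
abbrev Signal (N : ℕ) := ℕ → Fin N → ℝ

/-- Action of a scalar polynomial on a scalar signal via the shift operator `σ`. -/
noncomputable def polyShift (a : Polynomial ℝ) (y : ℕ → ℝ) : ℕ → ℝ :=
  fun t => a.sum fun k c => c * y (t + k)

/-- Action of a polynomial matrix on a signal via the shift operator `σ`. -/
noncomputable def matShift {α β : Type*} [Fintype β]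
    (P : Matrix α β (Polynomial ℝ)) (y : ℕ → β → ℝ) : ℕ → α → ℝ :=
  fun t i => ∑ j, polyShift (P i j) (fun s => y s j) t

/-- Support of a signal: indices of components not identically zero. -/
def sigSupp {N : ℕ} (y : Signal N) : Set (Fin N) := {i | ¬ ∀ t, y t i = 0}

/-- Weight of a signal. -/
noncomputable def wt {N : ℕ} (y : Signal N) : ℕ := (sigSupp y).ncard

/-- A polynomial matrix is left unimodular if it has a polynomial left inverse. -/
def LeftUnimodular {α β : Type*} [Fintype α] [Fintype β] [DecidableEq β]
    (P : Matrix α β (Polynomial ℝ)) : Prop :=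
  ∃ G : Matrix β α (Polynomial ℝ), G * P = 1

/-- Submatrix of the columns of `R` indexed by `J`. -/
def colSub {N : ℕ} (R : Matrix (Fin N) (Fin N) (Polynomial ℝ)) (J : Finset (Fin N)) :
    Matrix (Fin N) {x // x ∈ J} (Polynomial ℝ) :=
  R.submatrix id (fun j => (j : Fin N))

/-- Submatrix of the rows of `M` indexed by `J`. -/
def rowSub {N m : ℕ} (M : Matrix (Fin N) (Fin m) (Polynomial ℝ)) (J : Finset (Fin N)) :
    Matrix {x // x ∈ J} (Fin m) (Polynomial ℝ) :=
  M.submatrix (fun i => (i : Fin N)) id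

/-- Restriction of a signal to the components indexed by `J`. -/
def sigRestrict {N : ℕ} (r : Signal N) (J : Finset (Fin N)) : ℕ → {x // x ∈ J} → ℝ :=
  fun t i => r t (i : Fin N)

/-- Security index: the minimum weight of a nonzero signal in the behavior. -/
noncomputable def secIdx {N : ℕ} (B : Set (Signal N)) : ℕ :=
  sInf {k | ∃ y ∈ B, y ≠ 0 ∧ wt y = k}

open Matrix

noncomputable def sigShift : Module.End ℝ (ℕ → ℝ) := LinearMap.funLeft ℝ ℝ (· + 1)

lemma sigShift_pow_apply (k : ℕ) (y : ℕ → ℝ) (t : ℕ) : (sigShift ^ k) y t = y (t + k) := by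
  induction k generalizing y with
  | zero => rfl
  | succ k ih => rw [pow_succ, Module.End.mul_apply, ih]; rfl

lemma polyShift_eq_aeval (a : ℝ[X]) (y : ℕ → ℝ) : polyShift a y = aeval sigShift a y := by
  funext t
  simp [polyShift, aeval_def, eval₂_eq_sum, Polynomial.sum, LinearMap.sum_apply,
    sigShift_pow_apply]

lemma polyShift_geom (L : ℂ →ₗ[ℝ] ℝ) (a : ℝ[X]) (z w : ℂ) (t : ℕ) :
    polyShift a (fun s => L (z ^ s * w)) t = L (aeval z a * z ^ t * w) := by
  simp only [polyShift, aeval_def, eval₂_eq_sum, Polynomial.sum, Finset.sum_mul, map_sum]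
  refine Finset.sum_congr rfl fun k _ => ?_
  rw [← smul_eq_mul (a.coeff k), ← map_smul, Algebra.algebraMap_eq_smul_one, pow_add,
    smul_mul_assoc, one_mul, smul_mul_assoc, smul_mul_assoc]
  ring_nf

section matShift

variable {α β γ : Type*} [Fintype β]

lemma matShift_mul [Fintype γ] (M : Matrix α β ℝ[X]) (P : Matrix β γ ℝ[X]) (y : ℕ → γ → ℝ) :
    matShift (M * P) y = matShift M (matShift P y) := by
  funext t i
  simp only [matShift, polyShift_eq_aeval, mul_apply, map_sum, map_mul, LinearMap.sum_apply,
    Finset.sum_apply, Module.End.mul_apply]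
  refine Finset.sum_comm.trans (Finset.sum_congr rfl fun j _ => ?_)
  rw [← Finset.sum_fn, map_sum, Finset.sum_apply]

lemma matShift_one [DecidableEq β] (y : ℕ → β → ℝ) : matShift (1 : Matrix β β ℝ[X]) y = y := by
  funext t i
  simp [matShift, polyShift_eq_aeval, one_apply, apply_ite, ite_apply]

lemma matShift_zero (P : Matrix α β ℝ[X]) : matShift P 0 = 0 := by
  funext t i
  simp [matShift, polyShift_eq_aeval, ← Pi.zero_def]

lemma matShift_submatrix [Fintype γ] (P : Matrix α β ℝ[X]) {e : γ → β}
    (he : Function.Injective e) (y : ℕ → β → ℝ) (hy : ∀ t, ∀ b ∉ Set.range e, y t b = 0) :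
    matShift (P.submatrix id e) (fun t c => y t (e c)) = matShift P y := by
  funext t i
  refine Fintype.sum_of_injective e he _ _ (fun b hb => ?_) fun c => rfl
  rw [show (fun s => y s b) = 0 from funext fun s => hy s b hb, polyShift_eq_aeval, map_zero]
  rfl

lemma forall_matShift_submatrix_eq_zero_iff [Fintype γ] (P : Matrix α β ℝ[X]) {e : γ → β}
    (he : Function.Injective e) :
    (∀ v, matShift (P.submatrix id e) v = 0 → v = 0) ↔
      ∀ y, matShift P y = 0 → (∀ t, ∀ b ∉ Set.range e, y t b = 0) → y = 0 := by
  constructor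
  · intro h y hy hye
    have hv := h _ ((matShift_submatrix P he y hye).trans hy)
    funext t b
    by_cases hb : b ∈ Set.range e
    · obtain ⟨c, rfl⟩ := hb
      exact congrFun (congrFun hv t) c
    · exact hye t b hb
  · intro h v hv
    let y : ℕ → β → ℝ := fun t => Function.extend e (v t) 0
    have hye : ∀ t, ∀ b ∉ Set.range e, y t b = 0 := fun t b hb =>
      Function.extend_apply' _ _ _ fun ⟨c, hc⟩ => hb ⟨c, hc⟩
    have hyv : (fun t c => y t (e c)) = v := funext fun t => funext (he.extend_apply (v t) 0)
    have hy := h y (by rw [← matShift_submatrix P he y hye, hyv, hv]) hye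
    rw [← hyv, hy]
    rfl

lemma matShift_geom_eq_zero (P : Matrix α β ℝ[X]) {z : ℂ} {v : β → ℂ}
    (hv : P.map (aeval z) *ᵥ v = 0) (L : ℂ →ₗ[ℝ] ℝ) :
    matShift P (fun t j => L (z ^ t * v j)) = 0 := by
  funext t i
  have hi : ∑ j, aeval z (P i j) * v j = 0 := congrFun hv i
  calc matShift P (fun t j => L (z ^ t * v j)) t i
      = L (z ^ t * ∑ j, aeval z (P i j) * v j) := by
        simp only [matShift, polyShift_geom, Finset.mul_sum, map_sum]
        exact Finset.sum_congr rfl fun j _ => by ring_nf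
    _ = 0 := by rw [hi, mul_zero, map_zero]

lemma exists_matShift_eq_zero_of_mulVec_eq_zero (P : Matrix α β ℝ[X]) {z : ℂ} {v : β → ℂ}
    (hv0 : v ≠ 0) (hv : P.map (aeval z) *ᵥ v = 0) :
    ∃ y : ℕ → β → ℝ, y ≠ 0 ∧ matShift P y = 0 := by
  by_cases hre : (fun t j => Complex.reLm (z ^ t * v j)) = 0
  · refine ⟨fun t j => Complex.imLm (z ^ t * v j), fun him => hv0 ?_,
      matShift_geom_eq_zero P hv _⟩
    funext j
    have h0 := congrFun (congrFun hre 0) j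
    have h1 := congrFun (congrFun him 0) j
    simp_all [Complex.ext_iff]
  · exact ⟨_, hre, matShift_geom_eq_zero P hv _⟩

end matShift

lemma exists_aeval_eq_zero_of_span_ne_top {ι K L : Type*} [Field K] [Field L] [IsAlgClosed L]
    [Algebra K L] (m : ι → K[X]) (h : Ideal.span (Set.range m) ≠ ⊤) :
    ∃ z : L, ∀ i, aeval z (m i) = 0 := by
  set g := Submodule.IsPrincipal.generator (Ideal.span (Set.range m))
  have hg : Ideal.span {g} = Ideal.span (Set.range m) :=
    Submodule.IsPrincipal.span_singleton_generator _
  have hgu : ¬IsUnit g := fun hu => h (hg ▸ Ideal.span_singleton_eq_top.mpr hu)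
  obtain ⟨z, hz⟩ := IsAlgClosed.exists_aeval_eq_zero L g (mt isUnit_iff_degree_eq_zero.mpr hgu)
  refine ⟨z, fun i => ?_⟩
  obtain ⟨q, hq⟩ := Ideal.mem_span_singleton.mp (hg ▸ Ideal.subset_span (Set.mem_range_self i))
  rw [hq, map_mul, hz, zero_mul]

section maxMinor

variable {α β : Type*} [Fintype α] [Fintype β] [DecidableEq β]

def Matrix.maxMinor {R : Type*} [CommRing R] (P : Matrix α β R) (f : β ↪ α) : R :=
  (P.submatrix f id).det

/-- If the columns of `A` were independent, some `card β` rows would be independent, and the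
corresponding maximal minor would be nonzero. -/
theorem Matrix.exists_mulVec_eq_zero_of_forall_maxMinor_eq_zero {K : Type*} [Field K]
    (A : Matrix α β K) (h : ∀ f, A.maxMinor f = 0) : ∃ v ≠ 0, A *ᵥ v = 0 := by
  by_contra! hker
  have hcols : LinearIndependent K A.col :=
    mulVec_injective_iff.mp ((injective_iff_map_eq_zero A.mulVecLin).mpr
      fun v hv => by_contra fun hv0 => hker v hv0 hv)
  obtain ⟨κ, a, ha, hspan, hrows⟩ := exists_linearIndependent' K A.row
  have : Fintype κ := Fintype.ofInjective a ha
  have hcard : Fintype.card κ = Fintype.card β := by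
    rw [← finrank_span_eq_card hrows, hspan, ← rank_eq_finrank_span_row,
      rank_eq_finrank_span_cols, finrank_span_eq_card hcols]
  let e : β ≃ κ := Fintype.equivOfCardEq hcard.symm
  refine (isUnit_iff_ne_zero.mp ?_) (h ⟨a ∘ e, ha.comp e.injective⟩)
  rw [maxMinor, ← isUnit_iff_isUnit_det, ← linearIndependent_rows_iff_isUnit]
  exact hrows.comp e e.injective

/-- Cramer's rule for each maximal minor, combined through a Bézout identity
`∑ f, c f * maxMinor f = 1`. -/
lemma leftUnimodular_of_span_maxMinor_eq_top (P : Matrix α β ℝ[X])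
    (h : Ideal.span (Set.range P.maxMinor) = ⊤) : LeftUnimodular P := by
  classical
  obtain ⟨c, hc⟩ := Ideal.mem_span_range_iff_exists_fun.mp (h ▸ Submodule.mem_top :
    (1 : ℝ[X]) ∈ Ideal.span (Set.range P.maxMinor))
  unfold Matrix.maxMinor at hc
  refine ⟨∑ f, c f • ((P.submatrix f id).adjugate * (1 : Matrix α α ℝ[X]).submatrix f id), ?_⟩
  have hsel (f : β ↪ α) : (1 : Matrix α α ℝ[X]).submatrix f id * P = P.submatrix f id := by
    simpa using (submatrix_mul 1 P f id id Function.bijective_id).symm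
  simp only [Matrix.sum_mul, Matrix.smul_mul, Matrix.mul_assoc, hsel, adjugate_mul, smul_smul,
    ← Finset.sum_smul, hc, one_smul]

theorem leftUnimodular_iff_forall_matShift_eq_zero (P : Matrix α β ℝ[X]) :
    LeftUnimodular P ↔ ∀ y, matShift P y = 0 → y = 0 := by
  constructor
  · rintro ⟨G, hG⟩ y hy
    rw [← matShift_one y, ← hG, matShift_mul, hy, matShift_zero]
  · intro hker
    by_contra hP
    obtain ⟨z, hz⟩ := exists_aeval_eq_zero_of_span_ne_top (L := ℂ) P.maxMinor
      (mt (leftUnimodular_of_span_maxMinor_eq_top P) hP)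
    obtain ⟨v, hv0, hv⟩ := (P.map (aeval z)).exists_mulVec_eq_zero_of_forall_maxMinor_eq_zero
      fun f => by
        rw [maxMinor, submatrix_map, ← AlgHom.mapMatrix_apply, ← AlgHom.map_det]
        exact hz f
    obtain ⟨y, hy0, hy⟩ := exists_matShift_eq_zero_of_mulVec_eq_zero P hv0 hv
    exact hy0 (hker y hy)

end maxMinor

lemma leftUnimodular_colSub_compl_iff {N : ℕ} (R : Matrix (Fin N) (Fin N) ℝ[X]) (i : Fin N) :
    LeftUnimodular (colSub R ({i}ᶜ : Finset (Fin N))) ↔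
      ∀ y : Signal N, matShift R y = 0 → (∀ t, y t i = 0) → y = 0 := by
  have hrange (b : Fin N) :
      b ∉ Set.range (Subtype.val : ({i}ᶜ : Finset (Fin N)) → Fin N) ↔ b = i := by
    simp
  rw [colSub, leftUnimodular_iff_forall_matShift_eq_zero,
    forall_matShift_submatrix_eq_zero_iff R Subtype.val_injective]
  simp only [hrange, forall_eq]

lemma wt_eq_iff {N : ℕ} (y : Signal N) : wt y = N ↔ ∀ i, ¬∀ t, y t i = 0 := by
  have h := Set.eq_univ_iff_ncard (sigSupp y)
  rw [Nat.card_fin] at h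
  rw [wt, ← h, Set.eq_univ_iff_forall]
  rfl

lemma secIdx_eq_iff {N : ℕ} {B : Set (Signal N)} (hB : ∃ y ∈ B, y ≠ 0) :
    secIdx B = N ↔ ∀ y ∈ B, y ≠ 0 → wt y = N := by
  have hwt : ∀ y : Signal N, wt y ≤ N := fun y => by
    simpa [wt] using Set.ncard_le_card (sigSupp y)
  constructor
  · intro h y hy hy0
    exact le_antisymm (hwt y) (h.symm.trans_le (Nat.sInf_le ⟨y, hy, hy0, rfl⟩))
  · intro h
    obtain ⟨y, hy, hy0⟩ := hB
    have : {k | ∃ y ∈ B, y ≠ 0 ∧ wt y = k} = {N} := by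
      ext k
      exact ⟨fun ⟨y, hy, hy0, hk⟩ => hk ▸ h y hy hy0, fun hk => ⟨y, hy, hy0, hk ▸ h y hy hy0⟩⟩
    rw [secIdx, this, csInf_singleton]

theorem maximally_secure_iff_general {N : ℕ}
    (R : Matrix (Fin N) (Fin N) (Polynomial ℝ))
    (B : Set (Signal N)) (hB : B = {y | matShift R y = 0})
    (hBne : ∃ y ∈ B, y ≠ 0) :
    secIdx B = N ↔ ∀ i : Fin N, LeftUnimodular (colSub R ({i}ᶜ : Finset (Fin N))) := by
  rw [secIdx_eq_iff hBne, hB]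
  simp only [wt_eq_iff, leftUnimodular_colSub_compl_iff]
  exact ⟨fun h i y hy hyi => by_contra fun hy0 => h y hy hy0 i hyi,
    fun h y hy hy0 i hyi => hy0 (h i y hy hyi)⟩

/-- the system is maximally secure (`δ(Σ) = N`) iff every
`N × (N-1)` submatrix of `R` obtained by deleting one column is left
unimodular. -/
theorem maximally_secure_iff {N : ℕ}
    (R : Matrix (Fin N) (Fin N) (Polynomial ℝ)) (hdet : R.det ≠ 0)
    (B : Set (Signal N)) (hB : B = {y | matShift R y = 0})
    (hBne : ∃ y ∈ B, y ≠ 0) :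
    secIdx B = N ↔ ∀ i : Fin N, LeftUnimodular (colSub R ({i}ᶜ : Finset (Fin N))) :=
  maximally_secure_iff_general R B hB hBne
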